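/- arXiv:0901.4662 — 5 statements merged into one kernel-verified Lean document; each statement's English description precedes it below -/
import Mathlib

section
/- Let Q be a finite quiver with face set Q_2 giving a cell decomposition of a surface, with coboundary map d : Z^{Q_1} → Z^{Q_2} summing a function over the arrows in the boundary of each face. Define N^+ = {v ∈ N^{Q_1} : d(v) = λ·1 for some λ ∈ N}, with degree deg(v) = λ. Then every element v ∈ N^+ of degree λ is a sum of λ perfect matchings, where a perfect matching is an element π ∈ {0,1}^{Q_1} with d(π) = 1. -/
/-!
Join a black face to a white face when they share an arrow on which `v` is positive. A set `A`
of black faces carries the weight `#A * λ` on its boundary, and all of this weight lies on the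
boundary of the white neighbours of `A`, which carries `#(neighbours) * λ`; so Hall's condition
holds, in both directions, and the resulting matching of faces is a bijection. Picking a shared
positive arrow for each matched pair gives a perfect matching `π ≤ v`, and `v - π` has degree
`λ - 1`.
-/

open Finset Function

theorem Finset.card_filter_mem_range_eq_one {α ι : Type*} {s : Finset α} {e : ι → α}
    [DecidablePred (· ∈ Set.range e)] (h : ∃! i, e i ∈ s) :
    #{a ∈ s | a ∈ Set.range e} = 1 := by
  obtain ⟨i, hi, huniq⟩ := h
  rw [card_eq_one]
  refine ⟨e i, ext fun a => ?_⟩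
  simp only [mem_filter, mem_singleton, Set.mem_range]
  constructor
  · rintro ⟨ha, j, rfl⟩
    rw [huniq j ha]
  · rintro rfl
    exact ⟨hi, i, rfl⟩

namespace DimerModel

variable {Q1 Q2 : Type} (bdry : Q2 → Finset Q1)

def IsPerfectMatching (π : Q1 → ℕ) : Prop :=
  (∀ a, π a ≤ 1) ∧ ∀ f, ∑ a ∈ bdry f, π a = 1

def SharePositiveArrow (v : Q1 → ℕ) (f g : Q2) : Prop :=
  ∃ a ∈ bdry f, 0 < v a ∧ a ∈ bdry g

variable {bdry}

theorem eq_of_mem_bdry {c : Q2 → Prop} (hc : ∀ a : Q1, ∃! f : Q2, c f ∧ a ∈ bdry f)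
    {f g : Q2} (hf : c f) (hg : c g) {a : Q1} (haf : a ∈ bdry f) (hag : a ∈ bdry g) : f = g :=
  (hc a).unique ⟨hf, haf⟩ ⟨hg, hag⟩

theorem sum_biUnion_bdry [DecidableEq Q1] {c : Q2 → Prop}
    (hc : ∀ a : Q1, ∃! f : Q2, c f ∧ a ∈ bdry f) {v : Q1 → ℕ} {lam : ℕ}
    (hv : ∀ f, ∑ a ∈ bdry f, v a = lam) (S : Finset {f // c f}) :
    ∑ a ∈ S.biUnion (fun f => bdry f.1), v a = #S * lam := by
  rw [sum_biUnion, sum_congr rfl fun f _ => hv f.1, sum_const, smul_eq_mul]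
  intro f _ g _ hfg
  exact disjoint_left.2 fun a haf hag => hfg (Subtype.ext (eq_of_mem_bdry hc f.2 g.2 haf hag))

theorem exists_injective_sharePositiveArrow [Fintype Q2] {c₁ c₂ : Q2 → Prop}
    (h₁ : ∀ a : Q1, ∃! f : Q2, c₁ f ∧ a ∈ bdry f) (h₂ : ∀ a : Q1, ∃! f : Q2, c₂ f ∧ a ∈ bdry f)
    {v : Q1 → ℕ} {lam : ℕ} (hlam : 0 < lam) (hv : ∀ f, ∑ a ∈ bdry f, v a = lam) :
    ∃ g : {f // c₁ f} → {f // c₂ f}, Injective g ∧ ∀ f, SharePositiveArrow bdry v f.1 (g f).1 := by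
  classical
  refine (Fintype.all_card_le_filter_rel_iff_exists_injective
    fun (f : {f // c₁ f}) (w : {f // c₂ f}) => SharePositiveArrow bdry v f.1 w.1).1 fun A => ?_
  set N : Finset {f // c₂ f} := {w | ∃ f ∈ A, SharePositiveArrow bdry v f w}
  refine Nat.le_of_mul_le_mul_right ?_ hlam
  calc #A * lam = ∑ a ∈ A.biUnion (fun f => bdry f.1), v a := (sum_biUnion_bdry h₁ hv A).symm
    _ ≤ ∑ a ∈ N.biUnion (fun f => bdry f.1), v a := sum_le_sum_of_ne_zero fun a ha hva => ?_
    _ = #N * lam := sum_biUnion_bdry h₂ hv N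
  obtain ⟨f, hfA, haf⟩ := mem_biUnion.1 ha
  obtain ⟨w, hw, -⟩ := h₂ a
  refine mem_biUnion.2 ⟨⟨w, hw.1⟩, ?_, hw.2⟩
  exact mem_filter.2 ⟨mem_univ _, f, hfA, a, haf, Nat.pos_of_ne_zero hva, hw.2⟩

section Bicoloured

variable {black : Q2 → Prop}
  (hblack : ∀ a : Q1, ∃! f : Q2, black f ∧ a ∈ bdry f)
  (hwhite : ∀ a : Q1, ∃! f : Q2, ¬ black f ∧ a ∈ bdry f)
include hblack hwhite

theorem existsUnique_mem_bdry_of_bijective {g : {f // black f} → {f // ¬ black f}}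
    (hg : Bijective g) {e : {f // black f} → Q1} (he : ∀ b, e b ∈ bdry b.1)
    (he' : ∀ b, e b ∈ bdry (g b).1) (f : Q2) : ∃! b, e b ∈ bdry f := by
  by_cases hf : black f
  · exact ⟨⟨f, hf⟩, he _, fun b hb => Subtype.ext (eq_of_mem_bdry hblack b.2 hf (he b) hb)⟩
  · obtain ⟨b, hb⟩ := hg.2 ⟨f, hf⟩
    refine ⟨b, by simpa only [hb] using he' b, fun b' hb' => hg.1 ?_⟩
    rw [hb]
    exact Subtype.ext (eq_of_mem_bdry hwhite (g b').2 hf (he' b') hb')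

theorem exists_isPerfectMatching_le [Fintype Q2] {v : Q1 → ℕ} {lam : ℕ} (hlam : 0 < lam)
    (hv : ∀ f, ∑ a ∈ bdry f, v a = lam) : ∃ π, IsPerfectMatching bdry π ∧ π ≤ v := by
  classical
  obtain ⟨g, hg, hgv⟩ := exists_injective_sharePositiveArrow hblack hwhite hlam hv
  obtain ⟨g', hg', -⟩ := exists_injective_sharePositiveArrow hwhite hblack hlam hv
  have hbij : Bijective g := (Fintype.bijective_iff_injective_and_card g).2
    ⟨hg, le_antisymm (Fintype.card_le_of_injective g hg) (Fintype.card_le_of_injective g' hg')⟩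
  choose e he hpos he' using hgv
  refine ⟨fun a => if a ∈ Set.range e then 1 else 0, ⟨fun a => ?_, fun f => ?_⟩, fun a => ?_⟩
  · dsimp only
    split_ifs <;> simp
  · rw [sum_boole, Nat.cast_id]
    exact card_filter_mem_range_eq_one
      (existsUnique_mem_bdry_of_bijective hblack hwhite hbij he he' f)
  · dsimp only
    split_ifs with h
    · obtain ⟨b, rfl⟩ := h
      exact hpos b
    · exact Nat.zero_le _

end Bicoloured

theorem sum_bdry_tsub_of_isPerfectMatching {v π : Q1 → ℕ} {n : ℕ}
    (hπ : IsPerfectMatching bdry π) (hπv : π ≤ v) (hv : ∀ f, ∑ a ∈ bdry f, v a = n + 1)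
    (f : Q2) : ∑ a ∈ bdry f, (v - π) a = n := by
  simp only [Pi.sub_apply]
  rw [sum_tsub_distrib _ fun a _ => hπv a, hv f, hπ.2 f, Nat.add_sub_cancel]

end DimerModel

open DimerModel

theorem degree_lambda_is_sum_of_lambda_perfect_matchings_general
    {Q1 Q2 : Type} [Fintype Q2]
    (bdry : Q2 → Finset Q1) (black : Q2 → Prop)
    (hblack : ∀ a : Q1, ∃! f : Q2, black f ∧ a ∈ bdry f)
    (hwhite : ∀ a : Q1, ∃! f : Q2, ¬ black f ∧ a ∈ bdry f)
    (v : Q1 → ℕ) (lam : ℕ)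
    (hv : ∀ f : Q2, ∑ a ∈ bdry f, v a = lam) :
    ∃ P : Fin lam → Q1 → ℕ,
      (∀ s : Fin lam,
        (∀ a : Q1, P s a ≤ 1) ∧ ∀ f : Q2, ∑ a ∈ bdry f, P s a = 1) ∧
      ∀ a : Q1, v a = ∑ s : Fin lam, P s a := by
  induction lam generalizing v with
  | zero =>
    refine ⟨Fin.elim0, fun s => s.elim0, fun a => ?_⟩
    obtain ⟨f, ⟨-, haf⟩, -⟩ := hblack a
    simpa using sum_eq_zero_iff.1 (hv f) a haf
  | succ n ih =>
    obtain ⟨π, hπ, hπv⟩ := exists_isPerfectMatching_le hblack hwhite n.succ_pos hv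
    obtain ⟨P, hP, hPv⟩ := ih (v - π) (sum_bdry_tsub_of_isPerfectMatching hπ hπv hv)
    refine ⟨Fin.cons π P, Fin.cases hπ hP, fun a => ?_⟩
    rw [Fin.sum_univ_succ, Fin.cons_zero]
    simp only [Fin.cons_succ, ← hPv a, Pi.sub_apply]
    exact (add_tsub_cancel_of_le (hπv a)).symm

theorem degree_lambda_is_sum_of_lambda_perfect_matchings
    {Q1 Q2 : Type} [Fintype Q1] [DecidableEq Q1] [Fintype Q2]
    (bdry : Q2 → Finset Q1) (black : Q2 → Prop)
    (hblack : ∀ a : Q1, ∃! f : Q2, black f ∧ a ∈ bdry f)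
    (hwhite : ∀ a : Q1, ∃! f : Q2, ¬ black f ∧ a ∈ bdry f)
    (v : Q1 → ℕ) (lam : ℕ)
    (hv : ∀ f : Q2, ∑ a ∈ bdry f, v a = lam) :
    ∃ P : Fin lam → Q1 → ℕ,
      (∀ s : Fin lam,
        (∀ a : Q1, P s a ≤ 1) ∧ ∀ f : Q2, ∑ a ∈ bdry f, P s a = 1) ∧
      ∀ a : Q1, v a = ∑ s : Fin lam, P s a :=
  degree_lambda_is_sum_of_lambda_perfect_matchings_general bdry black hblack hwhite v lam hv
end

section
/- If a dimer model admits an R-symmetry satisfying the normalized non-degeneracy condition (sum of weights around each quiver face equals deg R) and the anomaly-vanishing condition at each quiver vertex (sum of weights on arrows incident to v equals deg R times (|H_v| − 1)), then |Q_0| − |Q_1| + |Q_2| = 0; hence the underlying surface has Euler characteristic zero and is a 2-torus. -/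
/-!
Consistency forces the surface to be a torus:
if the quiver with faces `Q = (Q₀, Q₁, Q₂)` dual to a dimer model (each arrow lies in
exactly two faces, has distinct head and tail, and the in- and out-valencies agree at each
vertex) admits an R-symmetry `R` of degree `deg R > 0` satisfying the non-degeneracy
condition `Σ_{a ∈ ∂f} R_a = deg R` for every face `f` and the anomaly-vanishing condition
`Σ_{a ∈ H_v ∪ T_v} R_a = deg R · (|H_v| − 1)` at every vertex `v`, then
`|Q₀| − |Q₁| + |Q₂| = 0`; i.e. the underlying surface has Euler characteristic zero,
hence is a 2-torus.
-/

theorem euler_characteristic_zero_of_anomaly_free_R_symmetry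
    {Q0 Q1 Q2 : Type} [Fintype Q0] [Fintype Q1] [Fintype Q2]
    [DecidableEq Q0] [DecidableEq Q1] [DecidableEq Q2]
    (hd tl : Q1 → Q0) (bdry : Q2 → Finset Q1)
    (htwo : ∀ a : Q1, (Finset.univ.filter fun f : Q2 => a ∈ bdry f).card = 2)
    (hnoloop : ∀ a : Q1, hd a ≠ tl a)
    (hHT : ∀ v : Q0, (Finset.univ.filter fun a : Q1 => hd a = v).card
                    = (Finset.univ.filter fun a : Q1 => tl a = v).card)
    (R : Q1 → ℤ) (hpos : ∀ a : Q1, 0 < R a)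
    (degR : ℤ) (hdeg : 0 < degR)
    (hfaces : ∀ f : Q2, ∑ a ∈ bdry f, R a = degR)
    (hanom : ∀ v : Q0,
      ∑ a ∈ Finset.univ.filter (fun a : Q1 => hd a = v ∨ tl a = v), R a
        = degR * (((Finset.univ.filter fun a : Q1 => hd a = v).card : ℤ) - 1)) :
    (Fintype.card Q0 : ℤ) - Fintype.card Q1 + Fintype.card Q2 = 0 := by
  classical
  set S : ℤ := ∑ a : Q1, R a with hS
  -- double count over vertices
  have key1 : ∑ v : Q0, ∑ a ∈ Finset.univ.filter (fun a : Q1 => hd a = v ∨ tl a = v), R a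
      = 2 * S := by
    simp_rw [Finset.sum_filter]
    rw [Finset.sum_comm, hS, Finset.mul_sum]
    refine Finset.sum_congr rfl fun a _ => ?_
    rw [← Finset.sum_filter]
    have hset : Finset.univ.filter (fun v : Q0 => hd a = v ∨ tl a = v) = {hd a, tl a} := by
      ext v
      simp [eq_comm, Finset.mem_insert]
    rw [hset, Finset.sum_pair (hnoloop a)]
    ring
  -- double count over faces
  have key2 : (Fintype.card Q2 : ℤ) * degR = 2 * S := by
    have h1 : ∑ f : Q2, ∑ a ∈ bdry f, R a = (Fintype.card Q2 : ℤ) * degR := by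
      simp [hfaces, Finset.card_univ, mul_comm]
    rw [← h1]
    have h2 : ∀ f : Q2, ∑ a ∈ bdry f, R a
        = ∑ a ∈ Finset.univ.filter (fun a : Q1 => a ∈ bdry f), R a := by
      intro f; congr 1; ext a; simp
    simp_rw [h2, Finset.sum_filter]
    rw [Finset.sum_comm, hS, Finset.mul_sum]
    refine Finset.sum_congr rfl fun a _ => ?_
    rw [← Finset.sum_filter, Finset.sum_const, htwo a]
    simp [two_mul]
  -- fiber count of heads
  have hfib : ∑ v : Q0, ((Finset.univ.filter fun a : Q1 => hd a = v).card : ℤ)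
      = (Fintype.card Q1 : ℤ) := by
    have := Finset.card_eq_sum_card_fiberwise
      (f := hd) (s := (Finset.univ : Finset Q1)) (t := (Finset.univ : Finset Q0))
      (fun x _ => Finset.mem_univ _)
    rw [← Nat.cast_sum]
    exact_mod_cast congrArg (Nat.cast : ℕ → ℤ) this.symm
  -- sum anomaly
  have key3 : 2 * S = degR * ((Fintype.card Q1 : ℤ) - (Fintype.card Q0 : ℤ)) := by
    rw [← key1]
    calc ∑ v : Q0, ∑ a ∈ Finset.univ.filter (fun a : Q1 => hd a = v ∨ tl a = v), R a
        = ∑ v : Q0, degR * (((Finset.univ.filter fun a : Q1 => hd a = v).card : ℤ) - 1) :=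
          Finset.sum_congr rfl fun v _ => hanom v
      _ = degR * ((Fintype.card Q1 : ℤ) - (Fintype.card Q0 : ℤ)) := by
          rw [← Finset.mul_sum, Finset.sum_sub_distrib, hfib]
          simp [Finset.card_univ]
  have hcancel : (Fintype.card Q2 : ℤ) = (Fintype.card Q1 : ℤ) - (Fintype.card Q0 : ℤ) := by
    have : degR * (Fintype.card Q2 : ℤ)
        = degR * ((Fintype.card Q1 : ℤ) - (Fintype.card Q0 : ℤ)) := by
      rw [← key3, ← key2]; ring
    exact mul_left_cancel₀ (ne_of_gt hdeg) this
  linarith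
end

section
/- Let π be any perfect matching with ⟨π, S(γ)⟩ = 0 for a ray γ of the global zig-zag fan, and let η be any representative zig-zag path of γ. Then either π − Zig(η) ∈ N^{Q_1} or π − Zag(η) ∈ N^{Q_1}; that is, π evaluates to 1 on all zigs of η or on all zags of η. -/
/-- Combinatorial data of the universal cover of the quiver (with faces) dual to a dimer
model on a 2-torus, together with the action of the deck transformation group `ℤ × ℤ`.
Every arrow lies in the boundary of exactly one black face and one white face. -/
structure DimerCover where
  V : Type
  A : Type
  F : Type
  hd : A → V
  tl : A → V
  black : F → Prop
  bface : A → F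
  wface : A → F
  bdry : F → Finset A
  bface_black : ∀ a, black (bface a)
  wface_white : ∀ a, ¬ black (wface a)
  mem_bface : ∀ a, a ∈ bdry (bface a)
  mem_wface : ∀ a, a ∈ bdry (wface a)
  mem_only : ∀ a f, a ∈ bdry f → f = bface a ∨ f = wface a
  act : ℤ × ℤ → A → A
  actV : ℤ × ℤ → V → V
  actF : ℤ × ℤ → F → F
  act_zero : ∀ a, act 0 a = a
  act_add : ∀ g g' a, act (g + g') a = act g (act g' a)
  act_free : ∀ g a, act g a = a → g = 0
  hd_act : ∀ g a, hd (act g a) = actV g (hd a)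
  tl_act : ∀ g a, tl (act g a) = actV g (tl a)
  bface_act : ∀ g a, bface (act g a) = actF g (bface a)
  wface_act : ∀ g a, wface (act g a) = actF g (wface a)
  bdry_act : ∀ g a f, a ∈ bdry f → act g a ∈ bdry (actF g f)
  black_act : ∀ g f, black (actF g f) ↔ black f

/-- A zig-zag flow on the universal cover: a doubly infinite path `η : ℤ → Q̃₁` such that
`η (2n)` and `η (2n+1)` lie in the boundary of a common black face and `η (2n−1)` and
`η (2n)` lie in the boundary of a common white face.  Arrows in even positions are the
zigs, arrows in odd positions the zags. -/
structure ZigZagFlow (D : DimerCover) where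
  η : ℤ → D.A
  comp : ∀ n : ℤ, D.hd (η n) = D.tl (η (n + 1))
  pairB : ∀ n : ℤ, D.bface (η (2 * n)) = D.bface (η (2 * n + 1))
  pairW : ∀ n : ℤ, D.wface (η (2 * n - 1)) = D.wface (η (2 * n))

namespace DimerCover

variable (D : DimerCover)

/-- `a` is an arrow of the zig-zag flow `Z`. -/
def OnFlow (Z : ZigZagFlow D) (a : D.A) : Prop := ∃ n : ℤ, Z.η n = a

/-- The zig-zag flows `Z` and `Z'` intersect in the arrow `a`. -/
def FlowsMeet (Z Z' : ZigZagFlow D) (a : D.A) : Prop := D.OnFlow Z a ∧ D.OnFlow Z' a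

/-- `g` is a period of the zig-zag flow `Z`, of (positive) length `k`. -/
def IsPeriodOf (Z : ZigZagFlow D) (g : ℤ × ℤ) (k : ℤ) : Prop :=
  0 < k ∧ ∀ n : ℤ, Z.η (n + k) = D.act g (Z.η n)

/-- `g ∈ H₁(T²) ≅ ℤ × ℤ` is the homology class of the zig-zag flow `Z`: the deck
transformation corresponding to one (minimal) period of `Z`. -/
def HomClass (Z : ZigZagFlow D) (g : ℤ × ℤ) : Prop :=
  ∃ k : ℤ, D.IsPeriodOf Z g k ∧
    ∀ (g' : ℤ × ℤ) (k' : ℤ), D.IsPeriodOf Z g' k' → k ≤ k'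

/-- `Z'` is a reparametrisation of `Z` (they define the same zig-zag flow). -/
def Reparam (Z Z' : ZigZagFlow D) : Prop := ∃ m : ℤ, ∀ n : ℤ, Z'.η n = Z.η (n + 2 * m)

end DimerCover

/-- Linear independence of two homology classes in `H₁(T²) ≅ ℤ × ℤ`. -/
def Indep (g g' : ℤ × ℤ) : Prop := g.1 * g'.2 - g.2 * g'.1 ≠ 0

/-- Geometric consistency of a dimer model, characterised in terms of zig-zag flows on the
universal cover: (a) no zig-zag flow intersects itself; (b) two zig-zag flows whose
homology classes are linearly independent intersect in precisely one arrow; (c) two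
distinct zig-zag flows whose homology classes are linearly dependent do not intersect. -/
def DimerCover.GeomConsistent (D : DimerCover) : Prop :=
  (∀ Z : ZigZagFlow D, Function.Injective Z.η) ∧
  (∀ (Z Z' : ZigZagFlow D) (g g' : ℤ × ℤ), D.HomClass Z g → D.HomClass Z' g' →
    Indep g g' → ∃! a, D.FlowsMeet Z Z' a) ∧
  (∀ (Z Z' : ZigZagFlow D) (g g' : ℤ × ℤ), D.HomClass Z g → D.HomClass Z' g' →
    ¬ Indep g g' → ¬ D.Reparam Z Z' → ¬ ∃ a, D.FlowsMeet Z Z' a)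

namespace DimerCover

variable (D : DimerCover)

/-- The zig-zag flow `Z` intersects the boundary of the face `f`. -/
def MeetsFace (Z : ZigZagFlow D) (f : D.F) : Prop := ∃ a ∈ D.bdry f, D.OnFlow Z a

/-- `u` generates a ray of the local zig-zag fan `ξ(f)`: it is the homology class of some
zig-zag flow intersecting the boundary of `f`. -/
def LocalRay (f : D.F) (u : ℤ × ℤ) : Prop :=
  ∃ Z : ZigZagFlow D, D.HomClass Z u ∧ D.MeetsFace Z f

/-- `u` generates a ray of the global zig-zag fan `Ξ`: it is the homology class of some
zig-zag flow. -/
def GlobalRay (u : ℤ × ℤ) : Prop := ∃ Z : ZigZagFlow D, D.HomClass Z u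

end DimerCover

/-- `w` lies in the interior of the two-dimensional cone spanned by `u` and `u'`
in `H₁(T²) ⊗ ℝ`. -/
def InOpenCone (u u' w : ℤ × ℤ) : Prop :=
  ∃ α β : ℚ, 0 < α ∧ 0 < β ∧
    (w.1 : ℚ) = α * u.1 + β * u'.1 ∧ (w.2 : ℚ) = α * u.2 + β * u'.2

/-- `w` lies in the closed two-dimensional cone spanned by `u` and `u'`
in `H₁(T²) ⊗ ℝ`. -/
def InClosedCone (u u' w : ℤ × ℤ) : Prop :=
  ∃ α β : ℚ, 0 ≤ α ∧ 0 ≤ β ∧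
    (w.1 : ℚ) = α * u.1 + β * u'.1 ∧ (w.2 : ℚ) = α * u.2 + β * u'.2

namespace DimerCover

variable (D : DimerCover)

/-- The rays generated by `u` and `u'` span a two-dimensional cone of the local zig-zag
fan `ξ(f)`: both are rays of `ξ(f)`, they are linearly independent, and no ray of `ξ(f)`
lies strictly between them. -/
def SpansConeLocal (f : D.F) (u u' : ℤ × ℤ) : Prop :=
  D.LocalRay f u ∧ D.LocalRay f u' ∧ Indep u u' ∧
    ¬ ∃ w : ℤ × ℤ, D.LocalRay f w ∧ InOpenCone u u' w

/-- `σ` is the two-dimensional cone of the global zig-zag fan `Ξ` spanned by the rays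
generated by `u⁺` (the anticlockwise ray of `σ`) and `u⁻` (the clockwise ray): both are
rays of `Ξ`, `u⁺` is anticlockwise of `u⁻` within an angle less than `π`, and no ray of
`Ξ` lies strictly between them. -/
def GlobalCone (uP uM : ℤ × ℤ) : Prop :=
  D.GlobalRay uP ∧ D.GlobalRay uM ∧ Indep uP uM ∧
    0 < uM.1 * uP.2 - uM.2 * uP.1 ∧
    ¬ ∃ w : ℤ × ℤ, D.GlobalRay w ∧ InOpenCone uP uM w

/-- `a` is the arrow in the boundary of the face `f` corresponding to the unique
two-dimensional cone `σ_f` of the local zig-zag fan `ξ(f)` containing the image of the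
global cone `σ` spanned by `u⁺, u⁻`: the arrow of `∂f` in which the representative
zig-zag flows of the two rays of `σ_f` intersect. -/
def ConeArrow (f : D.F) (uP uM : ℤ × ℤ) (a : D.A) : Prop :=
  ∃ w w' : ℤ × ℤ, D.SpansConeLocal f w w' ∧
    InClosedCone w w' uP ∧ InClosedCone w w' uM ∧
    a ∈ D.bdry f ∧
    ∃ Z Z' : ZigZagFlow D, D.HomClass Z w ∧ D.HomClass Z' w' ∧
      D.MeetsFace Z f ∧ D.MeetsFace Z' f ∧ D.FlowsMeet Z Z' a

/-- A perfect matching of the dimer model, viewed equivariantly on the universal cover: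
a `ℤ²`-invariant `{0,1}`-valued function on the arrows whose sum over the boundary of
every face is `1`. -/
def IsPerfectMatching (P : D.A → ℤ) : Prop :=
  (∀ g a, P (D.act g a) = P a) ∧ (∀ a, P a = 0 ∨ P a = 1) ∧
    ∀ f : D.F, (∑ a ∈ D.bdry f, P a) = 1

/-- `P` is the perfect matching `P(σ)` associated to the two-dimensional cone `σ` of the
global zig-zag fan spanned by `u⁺` and `u⁻`: the perfect matching which, on the boundary
of each face `f`, is the indicator function of the arrow corresponding to the cone of
`ξ(f)` containing the image of `σ`. -/
def IsPsigma (uP uM : ℤ × ℤ) (P : D.A → ℤ) : Prop :=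
  D.IsPerfectMatching P ∧
    ∀ a : D.A, P a = 1 ↔ D.ConeArrow (D.bface a) uP uM a

/-- `a` is a zig (an arrow in even position) of some representative zig-zag flow of the
ray generated by `u`. -/
def IsZigOfRay (u : ℤ × ℤ) (a : D.A) : Prop :=
  ∃ Z : ZigZagFlow D, D.HomClass Z u ∧ ∃ n : ℤ, Z.η (2 * n) = a

/-- `a` is a zag (an arrow in odd position) of some representative zig-zag flow of the
ray generated by `u`. -/
def IsZagOfRay (u : ℤ × ℤ) (a : D.A) : Prop :=
  ∃ Z : ZigZagFlow D, D.HomClass Z u ∧ ∃ n : ℤ, Z.η (2 * n + 1) = a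

end DimerCover

/-- `a` is an arrow of the black or white boundary flow of the zig-zag flow `Z`: it lies
in the boundary of a black face containing a zig-zag pair of `Z` (resp. a white face
containing a zag-zig pair of `Z`) but is not one of the two arrows of `Z` in that face. -/
def DimerCover.BoundaryArrowOf (D : DimerCover) (Z : ZigZagFlow D) (a : D.A) : Prop :=
  ∃ n : ℤ,
    (a ∈ D.bdry (D.bface (Z.η (2 * n))) ∧ a ≠ Z.η (2 * n) ∧ a ≠ Z.η (2 * n + 1)) ∨
    (a ∈ D.bdry (D.wface (Z.η (2 * n))) ∧ a ≠ Z.η (2 * n) ∧ a ≠ Z.η (2 * n - 1))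

/-- `a` is an arrow of the system of boundary paths `S(γ)` of the ray `γ` generated by
`u`: an arrow of a (black or white) boundary path of some representative zig-zag flow of
`γ`.  A perfect matching `π` satisfies `⟨π, S(γ)⟩ = 0` exactly when it vanishes on all
such arrows. -/
def DimerCover.BoundaryArrowOfRay (D : DimerCover) (u : ℤ × ℤ) (a : D.A) : Prop :=
  ∃ Z : ZigZagFlow D, D.HomClass Z u ∧ D.BoundaryArrowOf Z a

/-!
On the black face of a zig–zag pair `η(2n), η(2n+1)` and on the white face of a zag–zig
pair `η(2n-1), η(2n)`, every other boundary arrow is a boundary arrow of `η`, where `π`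
vanishes. Since `π` sums to `1` over each face and `η` is injective by geometric
consistency, `π` sums to `1` on any two consecutive arrows of `η`. Hence `π ∘ η` is
`2`-periodic with values in `{0, 1}`, so `π` is `1` on all zigs or on all zags.
-/

theorem Function.periodic_two_of_add_succ_eq {G : Type*} [AddCommGroup G] {s : ℤ → G} {c : G}
    (h : ∀ m, s m + s (m + 1) = c) : Function.Periodic s 2 := fun m => by
  have hnext := h (m + 1)
  rw [add_assoc, one_add_one_eq_two] at hnext
  exact add_left_cancel (a := s (m + 1)) (by rw [hnext, add_comm, h m])

namespace ZigZagFlow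

variable {D : DimerCover} (Z : ZigZagFlow D)

theorem zag_mem_bdry_bface (n : ℤ) :
    Z.η (2 * n + 1) ∈ D.bdry (D.bface (Z.η (2 * n))) := by
  rw [Z.pairB n]
  exact D.mem_bface _

theorem zag_mem_bdry_wface (n : ℤ) :
    Z.η (2 * n - 1) ∈ D.bdry (D.wface (Z.η (2 * n))) := by
  rw [← Z.pairW n]
  exact D.mem_wface _

end ZigZagFlow

namespace DimerCover

variable {D : DimerCover}

theorem IsPerfectMatching.add_eq_one {P : D.A → ℤ} (hP : D.IsPerfectMatching P) {f : D.F}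
    {a b : D.A} (ha : a ∈ D.bdry f) (hb : b ∈ D.bdry f) (hab : a ≠ b)
    (hzero : ∀ c ∈ D.bdry f, c ≠ a ∧ c ≠ b → P c = 0) : P a + P b = 1 :=
  (Finset.sum_eq_add_of_mem a b ha hb hab hzero).symm.trans (hP.2.2 f)

theorem IsPerfectMatching.add_succ_eq_one_of_vanishing_on_boundary {P : D.A → ℤ}
    (hP : D.IsPerfectMatching P) {Z : ZigZagFlow D} (hinj : Function.Injective Z.η)
    (hvanish : ∀ a, D.BoundaryArrowOf Z a → P a = 0) (m : ℤ) :
    P (Z.η m) + P (Z.η (m + 1)) = 1 := by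
  obtain ⟨n, rfl | rfl⟩ := Int.even_or_odd' m
  · exact hP.add_eq_one (D.mem_bface _) (Z.zag_mem_bdry_bface n) (hinj.ne (by omega))
      fun c hc hne => hvanish c ⟨n, .inl ⟨hc, hne⟩⟩
  · rw [show 2 * n + 1 + 1 = 2 * (n + 1) by ring, show 2 * n + 1 = 2 * (n + 1) - 1 by ring]
    exact hP.add_eq_one (Z.zag_mem_bdry_wface (n + 1)) (D.mem_wface _) (hinj.ne (by omega))
      fun c hc hne => hvanish c ⟨n + 1, .inr ⟨hc, hne.2, hne.1⟩⟩

end DimerCover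

theorem matching_vanishing_on_boundary_system_resonates_general
    (D : DimerCover) (hGC : D.GeomConsistent)
    (u : ℤ × ℤ)
    (π : D.A → ℤ) (hπ : D.IsPerfectMatching π)
    (hvanish : ∀ a : D.A, D.BoundaryArrowOfRay u a → π a = 0)
    (Z : ZigZagFlow D) (hZ : D.HomClass Z u) :
    (∀ n : ℤ, π (Z.η (2 * n)) = 1) ∨ (∀ n : ℤ, π (Z.η (2 * n + 1)) = 1) := by
  have hsum := hπ.add_succ_eq_one_of_vanishing_on_boundary (hGC.1 Z)
    fun a ha => hvanish a ⟨Z, hZ, ha⟩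
  have hzig (n : ℤ) : π (Z.η (2 * n)) = π (Z.η 0) := by
    rw [mul_comm]
    exact ((Function.periodic_two_of_add_succ_eq hsum).int_mul n).eq
  rcases hπ.2.1 (Z.η 0) with h0 | h1
  · right
    intro n
    linarith [hsum (2 * n), hzig n]
  · left
    intro n
    rw [hzig n, h1]

theorem matching_vanishing_on_boundary_system_resonates
    (D : DimerCover) (hGC : D.GeomConsistent)
    (u : ℤ × ℤ) (hray : D.GlobalRay u)
    (π : D.A → ℤ) (hπ : D.IsPerfectMatching π)
    (hvanish : ∀ a : D.A, D.BoundaryArrowOfRay u a → π a = 0)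
    (Z : ZigZagFlow D) (hZ : D.HomClass Z u) :
    (∀ n : ℤ, π (Z.η (2 * n)) = 1) ∨ (∀ n : ℤ, π (Z.η (2 * n + 1)) = 1) :=
  matching_vanishing_on_boundary_system_resonates_general D hGC u π hπ hvanish Z hZ
end

section
/- The centre of the non-commutative toric algebra B = C[\underline{M}^+] = ⊕_{i,j ∈ Q_0} C[M_{ij}^+] is isomorphic to R = C[M_o^+], embedded diagonally via r ↦ r·Id. -/
/-!
Non-commutative toric data `(N, Q₀, d, N⁺)`: a finite set `Q₀`, a lattice `N`, a lattice
map `d : ℤ^{Q₀} → N` whose kernel is `ℤ·𝟙`, and a saturated submonoid `N⁺` of `N` coming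
from a strongly convex rational polyhedral cone, such that (1) `M_{ij}⁺ ≠ ∅` for all
`i, j ∈ Q₀`, and (2) `N⁺` is the dual of the monoid generated by all the `M_{ij}⁺`.
Here `M = N^∨` is the dual lattice (modelled as `N →+ ℤ`), `∂ = d^∨`,
`M⁺ = (N⁺)^∨`, `M_{ij} = ∂⁻¹(j − i)`, `M_{ij}⁺ = M_{ij} ∩ M⁺` and `M_o = ∂⁻¹(0)`.
-/

section ToricData

variable {Q0 : Type} {N : Type} [AddCommGroup N]

/-- `m ∈ M⁺ = (N⁺)^∨ `: `m` is non-negative on the cone `N⁺`. -/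
def MemMPlus (Nplus : AddSubmonoid N) (m : N →+ ℤ) : Prop :=
  ∀ n ∈ Nplus, 0 ≤ m n

/-- `∂ m = j − i`, i.e. `m ∈ M_{ij} = ∂⁻¹(j − i)`, where `∂` is dual to `d`. -/
def MemMij [DecidableEq Q0] (d : (Q0 → ℤ) →+ N) (i j : Q0) (m : N →+ ℤ) : Prop :=
  ∀ v : Q0, m (d (Pi.single v 1)) = (if v = j then 1 else 0) - (if v = i then 1 else 0)

/-- `m ∈ M_{ij}⁺ = M_{ij} ∩ M⁺`. -/
def MemMijPlus [DecidableEq Q0] (d : (Q0 → ℤ) →+ N) (Nplus : AddSubmonoid N)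
    (i j : Q0) (m : N →+ ℤ) : Prop :=
  MemMPlus Nplus m ∧ MemMij d i j m

/-- `m ∈ M_o = ∂⁻¹(0)`: `m` kills the image of `d`. -/
def MemMo [DecidableEq Q0] (d : (Q0 → ℤ) →+ N) (m : N →+ ℤ) : Prop :=
  ∀ v : Q0, m (d (Pi.single v 1)) = 0

/-- `m ∈ M_o⁺ = M_o ∩ M⁺`. -/
def MemMoPlus [DecidableEq Q0] (d : (Q0 → ℤ) →+ N) (Nplus : AddSubmonoid N) (m : N →+ ℤ) : Prop :=
  MemMPlus Nplus m ∧ MemMo d m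

/-- The non-commutative toric algebra `B = C[\underline{M}⁺] = ⊕_{i,j} C[M_{ij}⁺]`,
viewed inside the matrix algebra `Mat_{Q₀}(C[M])`: `b` is the matrix of an element of `B`
when the `(i,j)` entry is supported on `M_{ij}⁺`. -/
def MemB [DecidableEq Q0] (d : (Q0 → ℤ) →+ N) (Nplus : AddSubmonoid N)
    (b : Matrix Q0 Q0 (AddMonoidAlgebra ℂ (N →+ ℤ))) : Prop :=
  ∀ i j : Q0, ∀ m ∈ (b i j).coeff.support, MemMijPlus d Nplus i j m

end ToricData

/-!
A central element of `B` commutes with every matrix unit `E_{kl} · x^m`, `m ∈ M_{kl}⁺`, and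
`M_{kl}⁺ ≠ ∅`. Since `x^m` is a unit of the group algebra `ℂ[M]`, the element then commutes with
every `E_{kl}`, so it is a scalar matrix `r · Id`, and `r`, a diagonal entry, lies in
`ℂ[M_{kk}⁺] = ℂ[M_o⁺]`.
-/

theorem AddMonoidAlgebra.isUnit_single_one {k G : Type*} [Semiring k] [AddGroup G] (m : G) :
    IsUnit (single m (1 : k)) :=
  (Group.isUnit (Multiplicative.ofAdd m)).map (of k G)

theorem Matrix.commute_single_one_of_commute_single {n α : Type*} [Fintype n] [DecidableEq n]
    [CommSemiring α] {i j : n} {u : α} (hu : IsUnit u) {M : Matrix n n α}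
    (h : Commute (single i j u) M) : Commute (single i j 1) M := by
  have hsingle : single i j u = u • single i j 1 := by rw [smul_single, smul_eq_mul, mul_one]
  rw [hsingle, ← hu.unit_spec] at h
  simpa [Units.smul_def, IsUnit.val_inv_mul] using h.smul_left hu.unit⁻¹

section ToricAlgebra

variable {Q0 : Type} [DecidableEq Q0] {N : Type} [AddCommGroup N] {d : (Q0 → ℤ) →+ N}
  {Nplus : AddSubmonoid N}

theorem memMij_self_iff {k : Q0} {m : N →+ ℤ} : MemMij d k k m ↔ MemMo d m := by
  simp only [MemMij, MemMo, sub_self]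

theorem memMijPlus_self_iff {k : Q0} {m : N →+ ℤ} :
    MemMijPlus d Nplus k k m ↔ MemMoPlus d Nplus m :=
  and_congr_right fun _ => memMij_self_iff

theorem memB_single {k l : Q0} {m : N →+ ℤ} (hm : MemMijPlus d Nplus k l m) :
    MemB d Nplus (Matrix.single k l (AddMonoidAlgebra.single m (1 : ℂ))) := by
  intro i j m' hm'
  by_cases hij : k = i ∧ l = j
  · obtain ⟨rfl, rfl⟩ := hij
    have hm'm : m' = m := by simpa [AddMonoidAlgebra.coeff_single] using hm'
    exact hm'm ▸ hm
  · simp [Matrix.single_apply_of_ne (h := hij)] at hm'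

theorem commute_single_one_of_forall_memB_commute [Fintype Q0]
    (hne : ∀ i j : Q0, ∃ m : N →+ ℤ, MemMijPlus d Nplus i j m)
    {b : Matrix Q0 Q0 (AddMonoidAlgebra ℂ (N →+ ℤ))} (h : ∀ c, MemB d Nplus c → b * c = c * b)
    (k l : Q0) : Commute (Matrix.single k l 1) b := by
  obtain ⟨m, hm⟩ := hne k l
  exact Matrix.commute_single_one_of_commute_single (AddMonoidAlgebra.isUnit_single_one m)
    (h _ (memB_single hm)).symm

end ToricAlgebra

theorem centre_of_toric_algebra_general
    {Q0 : Type} [Fintype Q0] [DecidableEq Q0]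
    {N : Type} [AddCommGroup N]
    (d : (Q0 → ℤ) →+ N)
    (Nplus : AddSubmonoid N)
    (hne : ∀ i j : Q0, ∃ m : N →+ ℤ, MemMijPlus d Nplus i j m)
    (b : Matrix Q0 Q0 (AddMonoidAlgebra ℂ (N →+ ℤ))) (hb : MemB d Nplus b) :
    (∀ c, MemB d Nplus c → b * c = c * b) ↔
      ∃ r : AddMonoidAlgebra ℂ (N →+ ℤ),
        (∀ m ∈ r.coeff.support, MemMoPlus d Nplus m) ∧ b = Matrix.scalar Q0 r := by
  constructor
  · intro h
    have hscalar : b ∈ Set.range (Matrix.scalar Q0) :=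
      Matrix.mem_range_scalar_iff_commute_single'.2 <|
        commute_single_one_of_forall_memB_commute hne h
    rcases isEmpty_or_nonempty Q0 with _ | ⟨⟨k⟩⟩
    · exact ⟨0, by simp, Subsingleton.elim _ _⟩
    obtain ⟨r, rfl⟩ := hscalar
    refine ⟨r, fun m hm => memMijPlus_self_iff.1 (hb k k m ?_), rfl⟩
    simpa using hm
  · rintro ⟨r, -, rfl⟩ c -
    exact Matrix.scalar_commute r (fun r' => mul_comm r r') c

theorem centre_of_toric_algebra
    {Q0 : Type} [Fintype Q0] [DecidableEq Q0]
    {N : Type} [AddCommGroup N]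
    (d : (Q0 → ℤ) →+ N)
    (hker : ∀ x : Q0 → ℤ, d x = 0 ↔ ∃ c : ℤ, ∀ v : Q0, x v = c)
    (Nplus : AddSubmonoid N)
    (hsat : ∀ (n : N) (k : ℕ), 0 < k → k • n ∈ Nplus → n ∈ Nplus)
    (hconvex : ∀ n : N, n ∈ Nplus → -n ∈ Nplus → n = 0)
    (hne : ∀ i j : Q0, ∃ m : N →+ ℤ, MemMijPlus d Nplus i j m)
    (hdual : ∀ n : N,
      (∀ (i j : Q0) (m : N →+ ℤ), MemMijPlus d Nplus i j m → 0 ≤ m n) → n ∈ Nplus)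
    (b : Matrix Q0 Q0 (AddMonoidAlgebra ℂ (N →+ ℤ))) (hb : MemB d Nplus b) :
    (∀ c, MemB d Nplus c → b * c = c * b) ↔
      ∃ r : AddMonoidAlgebra ℂ (N →+ ℤ),
        (∀ m ∈ r.coeff.support, MemMoPlus d Nplus m) ∧ b = Matrix.scalar Q0 r :=
  centre_of_toric_algebra_general d Nplus hne b hb
end

section
/- For non-commutative toric data, for any m ∈ M there exists ζ ∈ M_o^+ such that m + ζ ∈ M^+. Equivalently, M_o^+ contains a point in the interior of the cone M^+ (an element pairing strictly positively with every nonzero element of N^+). -/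
/-!
If `g ∈ N⁺` is nonzero, strong convexity gives `-g ∉ N⁺`, so by the duality axiom some
`m ∈ M_{ij}⁺` is strictly positive on `g`; adding any `m' ∈ M_{ji}⁺` lands in `M_o⁺` and stays
positive on `g`. Summing such elements over a finite generating set of `N⁺` yields `ζ ∈ M_o⁺`
positive on every nonzero generator, hence on every nonzero element of `N⁺`. Since `ζ` is
integer-valued it is at least `1` on nonzero generators, so `m + k • ζ ∈ M⁺` once
`k ≥ ∑_g |m g|`.
-/

section MoPlus

variable {Q0 : Type} [DecidableEq Q0] {N : Type} [AddCommGroup N]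
  {d : (Q0 → ℤ) →+ N} {Nplus : AddSubmonoid N}

def moPlus (d : (Q0 → ℤ) →+ N) (Nplus : AddSubmonoid N) : AddSubmonoid (N →+ ℤ) where
  carrier := {m | MemMoPlus d Nplus m}
  add_mem' {m m'} hm hm' :=
    ⟨fun n hn => add_nonneg (hm.1 n hn) (hm'.1 n hn),
      fun v => by simp only [AddMonoidHom.add_apply, hm.2 v, hm'.2 v, add_zero]⟩
  zero_mem' := ⟨fun _ _ => le_rfl, fun _ => rfl⟩

theorem MemMijPlus.add_mem_moPlus {i j : Q0} {m m' : N →+ ℤ}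
    (hm : MemMijPlus d Nplus i j m) (hm' : MemMijPlus d Nplus j i m') :
    m + m' ∈ moPlus d Nplus :=
  ⟨fun n hn => add_nonneg (hm.1 n hn) (hm'.1 n hn),
    fun v => by simp only [AddMonoidHom.add_apply, hm.2 v, hm'.2 v]; ring⟩

theorem exists_mem_moPlus_pos
    (hconvex : ∀ n : N, n ∈ Nplus → -n ∈ Nplus → n = 0)
    (hne : ∀ i j : Q0, ∃ m : N →+ ℤ, MemMijPlus d Nplus i j m)
    (hdual : ∀ n : N,
      (∀ (i j : Q0) (m : N →+ ℤ), MemMijPlus d Nplus i j m → 0 ≤ m n) → n ∈ Nplus)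
    {g : N} (hg : g ∈ Nplus) (hg0 : g ≠ 0) :
    ∃ ζ ∈ moPlus d Nplus, 0 < ζ g := by
  have hneg : -g ∉ Nplus := fun h => hg0 (hconvex g hg h)
  obtain ⟨i, j, m, hm, hmg⟩ : ∃ i j m, MemMijPlus d Nplus i j m ∧ m (-g) < 0 := by
    simpa using mt (hdual (-g)) hneg
  obtain ⟨m', hm'⟩ := hne j i
  refine ⟨m + m', hm.add_mem_moPlus hm', ?_⟩
  rw [map_neg] at hmg
  simp only [AddMonoidHom.add_apply]
  linarith [hm'.1 g hg]

theorem exists_mem_moPlus_pos_on_finset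
    (hconvex : ∀ n : N, n ∈ Nplus → -n ∈ Nplus → n = 0)
    (hne : ∀ i j : Q0, ∃ m : N →+ ℤ, MemMijPlus d Nplus i j m)
    (hdual : ∀ n : N,
      (∀ (i j : Q0) (m : N →+ ℤ), MemMijPlus d Nplus i j m → 0 ≤ m n) → n ∈ Nplus)
    (s : Finset N) (hs : (s : Set N) ⊆ Nplus) :
    ∃ ζ ∈ moPlus d Nplus, ∀ g ∈ s, g ≠ 0 → 0 < ζ g := by
  classical
  induction s using Finset.induction_on with
  | empty => exact ⟨0, zero_mem _, by simp⟩
  | insert a s _ ih =>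
    rw [Finset.coe_insert, Set.insert_subset_iff] at hs
    obtain ⟨ζ, hζ, hζpos⟩ := ih hs.2
    by_cases ha : a = 0
    · refine ⟨ζ, hζ, fun g hg hg0 => hζpos g ?_ hg0⟩
      simpa [ha, hg0] using hg
    obtain ⟨ξ, hξ, hξa⟩ := exists_mem_moPlus_pos hconvex hne hdual hs.1 ha
    refine ⟨ζ + ξ, add_mem hζ hξ, fun g hg hg0 => ?_⟩
    simp only [AddMonoidHom.add_apply]
    rcases Finset.mem_insert.1 hg with rfl | hg
    · linarith [hζ.1 g hs.1]
    · linarith [hζpos g hg hg0, hξ.1 g (hs.2 hg)]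

end MoPlus

section Closure

variable {N : Type} [AddCommGroup N] {s : Set N} {φ : N →+ ℤ}

theorem memMPlus_closure_of_nonneg (h : ∀ g ∈ s, 0 ≤ φ g) :
    MemMPlus (AddSubmonoid.closure s) φ := fun n hn => by
  induction hn using AddSubmonoid.closure_induction with
  | mem g hg => exact h g hg
  | zero => simp
  | add x y _ _ hx hy => rw [map_add]; exact add_nonneg hx hy

theorem pos_of_mem_closure (h : ∀ g ∈ s, g ≠ 0 → 0 < φ g) :
    ∀ n ∈ AddSubmonoid.closure s, n ≠ 0 → 0 < φ n := by
  suffices ∀ n ∈ AddSubmonoid.closure s, n = 0 ∨ 0 < φ n from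
    fun n hn hn0 => (this n hn).resolve_left hn0
  intro n hn
  induction hn using AddSubmonoid.closure_induction with
  | mem g hg => exact or_iff_not_imp_left.2 (h g hg)
  | zero => exact Or.inl rfl
  | add x y _ _ hx hy =>
    rcases hx with rfl | hx
    · simpa using hy
    rcases hy with rfl | hy
    · simpa using Or.inr hx
    · exact Or.inr (by rw [map_add]; exact add_pos hx hy)

theorem exists_memMPlus_add_nsmul_closure {s : Finset N} {ζ : N →+ ℤ}
    (hζ : ∀ g ∈ s, g ≠ 0 → 0 < ζ g) (m : N →+ ℤ) :
    ∃ k : ℕ, MemMPlus (AddSubmonoid.closure (s : Set N)) (m + k • ζ) := by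
  refine ⟨∑ g ∈ s, (m g).natAbs, memMPlus_closure_of_nonneg fun g hg => ?_⟩
  rcases eq_or_ne g 0 with rfl | hg0
  · simp
  have hk : ((m g).natAbs : ℤ) ≤ ((∑ g ∈ s, (m g).natAbs : ℕ) : ℤ) := by
    exact_mod_cast Finset.single_le_sum (f := fun g => (m g).natAbs) (by simp) hg
  have hζg : 1 ≤ ζ g := hζ g hg hg0
  have hmg : -m g ≤ (m g).natAbs := by omega
  simp only [AddMonoidHom.add_apply, AddMonoidHom.nsmul_apply, nsmul_eq_mul]
  nlinarith

end Closure

theorem Mo_plus_shifts_into_M_plus_general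
    {Q0 : Type} [DecidableEq Q0]
    {N : Type} [AddCommGroup N]
    (d : (Q0 → ℤ) →+ N)
    (Nplus : AddSubmonoid N)
    -- `N⁺` is finitely generated (Gordan)
    (hfg : ∃ s : Finset N, AddSubmonoid.closure (s : Set N) = Nplus)
    (hconvex : ∀ n : N, n ∈ Nplus → -n ∈ Nplus → n = 0)
    (hne : ∀ i j : Q0, ∃ m : N →+ ℤ, MemMijPlus d Nplus i j m)
    (hdual : ∀ n : N,
      (∀ (i j : Q0) (m : N →+ ℤ), MemMijPlus d Nplus i j m → 0 ≤ m n) → n ∈ Nplus) :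
    (∀ m : N →+ ℤ, ∃ ζ : N →+ ℤ, MemMoPlus d Nplus ζ ∧ MemMPlus Nplus (m + ζ)) ∧
    (∃ ζ : N →+ ℤ, MemMoPlus d Nplus ζ ∧ ∀ n ∈ Nplus, n ≠ 0 → 0 < ζ n) := by
  obtain ⟨s, rfl⟩ := hfg
  obtain ⟨ζ, hζ, hpos⟩ :=
    exists_mem_moPlus_pos_on_finset hconvex hne hdual s AddSubmonoid.subset_closure
  refine ⟨fun m => ?_, ζ, hζ, pos_of_mem_closure hpos⟩
  obtain ⟨k, hk⟩ := exists_memMPlus_add_nsmul_closure hpos m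
  exact ⟨k • ζ, nsmul_mem hζ k, hk⟩

theorem Mo_plus_shifts_into_M_plus
    {Q0 : Type} [Fintype Q0] [DecidableEq Q0]
    {N : Type} [AddCommGroup N]
    (d : (Q0 → ℤ) →+ N)
    (hker : ∀ x : Q0 → ℤ, d x = 0 ↔ ∃ c : ℤ, ∀ v : Q0, x v = c)
    (Nplus : AddSubmonoid N)
    -- `N⁺` is cut out by finitely many rational inequalities (rational polyhedral, saturated)
    (hpoly : ∃ S : Finset (N →+ ℤ), ∀ n : N, n ∈ Nplus ↔ ∀ φ ∈ S, 0 ≤ φ n)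
    -- `N⁺` is finitely generated (Gordan)
    (hfg : ∃ s : Finset N, AddSubmonoid.closure (s : Set N) = Nplus)
    (hsat : ∀ (n : N) (k : ℕ), 0 < k → k • n ∈ Nplus → n ∈ Nplus)
    (hconvex : ∀ n : N, n ∈ Nplus → -n ∈ Nplus → n = 0)
    (hne : ∀ i j : Q0, ∃ m : N →+ ℤ, MemMijPlus d Nplus i j m)
    (hdual : ∀ n : N,
      (∀ (i j : Q0) (m : N →+ ℤ), MemMijPlus d Nplus i j m → 0 ≤ m n) → n ∈ Nplus) :
    (∀ m : N →+ ℤ, ∃ ζ : N →+ ℤ, MemMoPlus d Nplus ζ ∧ MemMPlus Nplus (m + ζ)) ∧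
    (∃ ζ : N →+ ℤ, MemMoPlus d Nplus ζ ∧ ∀ n ∈ Nplus, n ≠ 0 → 0 < ζ n) :=
  Mo_plus_shifts_into_M_plus_general d Nplus hfg hconvex hne hdual
end
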